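/- For every integer n ≥ 2, the number of distinct prime divisors of π_n^{π_n} − 1 is at least 2^n, where π_n denotes the product of the first n prime numbers. -/
import Mathlib

/-- `π_n`: the product of the first `n` prime numbers. -/
noncomputable def primesProd (n : ℕ) : ℕ := ∏ i ∈ Finset.range n, Nat.nth Nat.Prime i

open Polynomial

lemma primesProd_pos (n : ℕ) : 0 < primesProd n :=
  Finset.prod_pos fun i _ => (Nat.prime_nth_prime i).pos

lemma three_le_primesProd {n : ℕ} (hn : 2 ≤ n) : 3 ≤ primesProd n := by
  have h1 : Nat.nth Nat.Prime 1 ∣ primesProd n :=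
    Finset.dvd_prod_of_mem _ (Finset.mem_range.2 (by omega))
  have h2 := Nat.add_two_le_nth_prime 1
  exact le_trans (by omega) (Nat.le_of_dvd (primesProd_pos n) h1)

lemma card_divisors_primesProd (n : ℕ) : (primesProd n).divisors.card = 2 ^ n := by
  induction n with
  | zero => simp [primesProd]
  | succ k ih =>
    have hq := Nat.prime_nth_prime k
    have hcop : (primesProd k).Coprime (Nat.nth Nat.Prime k) := by
      refine Nat.Coprime.symm ((Nat.Prime.coprime_iff_not_dvd hq).mpr ?_)
      intro h
      obtain ⟨i, hi, hdvd⟩ := (hq.prime.dvd_finset_prod_iff _).mp h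
      have heq : Nat.nth Nat.Prime k = Nat.nth Nat.Prime i :=
        (Nat.prime_dvd_prime_iff_eq hq (Nat.prime_nth_prime i)).mp hdvd
      have := Nat.nth_injective Nat.infinite_setOf_prime heq
      exact absurd (Finset.mem_range.mp hi) (by omega)
    have hstep : primesProd (k + 1) = primesProd k * Nat.nth Nat.Prime k :=
      Finset.prod_range_succ _ _
    rw [hstep, hcop.card_divisors_mul, ih, hq.divisors,
      Finset.card_insert_of_notMem (by simp [hq.one_lt.ne]), Finset.card_singleton]
    ring

/-- A prime cannot divide values of two different cyclotomic
polynomials at `m` when both indices divide `m`. -/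
lemma cyclo_index_eq {m d e p : ℕ} (hm : 2 ≤ m) (hdm : d ∣ m) (hem : e ∣ m)
    (hp : p.Prime)
    (hpd : (p : ℤ) ∣ (cyclotomic d ℤ).eval (m : ℤ))
    (hpe : (p : ℤ) ∣ (cyclotomic e ℤ).eval (m : ℤ)) : d = e := by
  have hm0 : 0 < m := by omega
  have hdvdN : ∀ f : ℕ, f ∣ m → (cyclotomic f ℤ).eval (m : ℤ) ∣ (m : ℤ) ^ m - 1 := by
    intro f hf
    have h2 : (cyclotomic f ℤ).eval (m : ℤ) ∣ (m : ℤ) ^ f - 1 := by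
      have := eval_dvd (x := (m : ℤ)) (cyclotomic.dvd_X_pow_sub_one f ℤ)
      simpa using this
    refine h2.trans ?_
    obtain ⟨k, hk⟩ := hf
    have hpow : (m : ℤ) ^ m - 1 = ((m : ℤ) ^ f) ^ k - 1 ^ k := by
      rw [← pow_mul, ← hk, one_pow]
    rw [hpow]
    exact sub_dvd_pow_sub_pow _ _ k
  have hpm : ¬ (p ∣ m) := by
    intro h
    have h1 : (p : ℤ) ∣ (m : ℤ) ^ m - 1 := hpd.trans (hdvdN d hdm)
    have h2 : (p : ℤ) ∣ (m : ℤ) ^ m := dvd_pow (Int.natCast_dvd_natCast.mpr h) (by omega)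
    have h3 : (p : ℤ) ∣ 1 := by
      have h4 := dvd_sub h2 h1
      simpa using h4
    have h5 : p ∣ 1 := by exact_mod_cast h3
    rw [Nat.dvd_one] at h5
    exact hp.one_lt.ne' h5
  have hd0 : d ≠ 0 := by rintro rfl; exact absurd (zero_dvd_iff.mp hdm) (by omega)
  have he0 : e ≠ 0 := by rintro rfl; exact absurd (zero_dvd_iff.mp hem) (by omega)
  haveI : Fact p.Prime := ⟨hp⟩
  haveI hnd : NeZero ((d : ZMod p)) := ⟨by
    rw [Ne, ZMod.natCast_eq_zero_iff]
    exact fun h => hpm (h.trans hdm)⟩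
  haveI hne : NeZero ((e : ZMod p)) := ⟨by
    rw [Ne, ZMod.natCast_eq_zero_iff]
    exact fun h => hpm (h.trans hem)⟩
  have hroot : ∀ f : ℕ, (p : ℤ) ∣ (cyclotomic f ℤ).eval (m : ℤ) →
      IsRoot (cyclotomic f (ZMod p)) (((m : ℤ) : ZMod p)) := by
    intro f hpf
    have h0 : (((cyclotomic f ℤ).eval (m : ℤ) : ℤ) : ZMod p) = 0 :=
      (ZMod.intCast_zmod_eq_zero_iff_dvd _ p).mpr hpf
    have h1 := eval_intCast_map (Int.castRingHom (ZMod p)) (cyclotomic f ℤ) (m : ℤ)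
    rw [map_cyclotomic_int] at h1
    simp only [Int.cast_id, Int.coe_castRingHom] at h1
    rw [IsRoot.def, h1]
    exact h0
  have hprimd : IsPrimitiveRoot (((m : ℤ) : ZMod p)) d :=
    isRoot_cyclotomic_iff.mp (hroot d hpd)
  have hprime : IsPrimitiveRoot (((m : ℤ) : ZMod p)) e :=
    isRoot_cyclotomic_iff.mp (hroot e hpe)
  rw [hprimd.eq_orderOf, hprime.eq_orderOf]

/-- Elkies: for `n ≥ 2`, the number of distinct prime divisors of
`π_n^{π_n} − 1` is at least `2^n`. -/
theorem elkies_prime_factors (n : ℕ) (hn : 2 ≤ n) :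
    2 ^ n ≤ (primesProd n ^ primesProd n - 1).primeFactors.card := by
  set m := primesProd n with hm
  have hm3 : 3 ≤ m := three_le_primesProd hn
  have hm0 : m ≠ 0 := by omega
  have hN1 : 1 < m ^ m := Nat.one_lt_pow (by omega) (by omega)
  have hN0 : m ^ m - 1 ≠ 0 := Nat.sub_ne_zero_of_lt hN1
  have hc2 : ∀ d ∈ m.divisors, 2 ≤ ((cyclotomic d ℤ).eval (m : ℤ)).natAbs := by
    intro d hd
    obtain ⟨hdm, -⟩ := Nat.mem_divisors.mp hd
    have hd0 : d ≠ 0 := by rintro rfl; exact hm0 (zero_dvd_iff.mp hdm)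
    rcases Nat.lt_or_ge d 2 with h | h
    · have hd1 : d = 1 := by omega
      subst hd1
      rw [cyclotomic_one]
      simp only [eval_sub, eval_X, eval_one]
      rw [show (m : ℤ) - 1 = ((m - 1 : ℕ) : ℤ) by push_cast [Nat.cast_sub (by omega : 1 ≤ m)]; ring]
      rw [Int.natAbs_natCast]
      omega
    · have hlt := sub_one_pow_totient_lt_natAbs_cyclotomic_eval (n := d) (q := m) h (by omega)
      have h1 : 2 ≤ (m - 1) ^ d.totient :=
        le_trans (by omega) (Nat.le_self_pow (Nat.totient_pos.mpr (by omega)).ne' _)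
      omega
  have hcast : ((m ^ m - 1 : ℕ) : ℤ) = (m : ℤ) ^ m - 1 := by
    rw [Nat.cast_sub hN1.le]; push_cast; ring
  have hdvdN : ∀ d ∈ m.divisors, ((cyclotomic d ℤ).eval (m : ℤ)).natAbs ∣ m ^ m - 1 := by
    intro d hd
    have hprod : ∏ e ∈ m.divisors, (cyclotomic e ℤ).eval (m : ℤ) = (m : ℤ) ^ m - 1 := by
      have h := prod_cyclotomic_eq_X_pow_sub_one (by omega : 0 < m) ℤ
      have h2 := congrArg (eval (m : ℤ)) h
      simpa [eval_prod] using h2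
    have h1 : (cyclotomic d ℤ).eval (m : ℤ) ∣ (m : ℤ) ^ m - 1 :=
      hprod ▸ Finset.dvd_prod_of_mem _ hd
    have h2 : ((m : ℤ) ^ m - 1).natAbs = m ^ m - 1 := by
      rw [← hcast, Int.natAbs_natCast]
    exact h2 ▸ Int.natAbs_dvd_natAbs.mpr h1
  rw [← card_divisors_primesProd n]
  apply Finset.card_le_card_of_injOn (fun d => ((cyclotomic d ℤ).eval (m : ℤ)).natAbs.minFac)
  · intro d hd
    have h2 := hc2 d hd
    exact Nat.mem_primeFactors.mpr
      ⟨Nat.minFac_prime (by omega), (Nat.minFac_dvd _).trans (hdvdN d hd), hN0⟩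
  · intro d hd e he hfe
    rw [Finset.mem_coe] at hd he
    have hfe' : ((cyclotomic d ℤ).eval (m : ℤ)).natAbs.minFac
        = ((cyclotomic e ℤ).eval (m : ℤ)).natAbs.minFac := hfe
    have hpprime : (((cyclotomic d ℤ).eval (m : ℤ)).natAbs.minFac).Prime :=
      Nat.minFac_prime (by have := hc2 d hd; omega)
    have hpd : ((((cyclotomic d ℤ).eval (m : ℤ)).natAbs.minFac : ℤ)) ∣
        (cyclotomic d ℤ).eval (m : ℤ) :=
      Int.dvd_natAbs.mp (Int.natCast_dvd_natCast.mpr (Nat.minFac_dvd _))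
    have hpe : ((((cyclotomic d ℤ).eval (m : ℤ)).natAbs.minFac : ℤ)) ∣
        (cyclotomic e ℤ).eval (m : ℤ) := by
      rw [hfe']
      exact Int.dvd_natAbs.mp (Int.natCast_dvd_natCast.mpr (Nat.minFac_dvd _))
    exact cyclo_index_eq (by omega) (Nat.mem_divisors.mp hd).1 (Nat.mem_divisors.mp he).1
      hpprime hpd hpe
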